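/- arXiv:2102.02415 — 4 statements merged into one kernel-verified Lean document; each statement's English description precedes it below -/
import Mathlib

section
/- Let B be a bicyclic graph of order n with maximum degree Δ ≥ 3 and no isolated vertices, and suppose n ≡ 0 (mod Δ−1). Then the forgotten topological index of B satisfies F(B) ≤ (Δ² + Δ + 2)·n + 26. -/
/-- Let `B` be a bicyclic graph of order `n` with maximum degree
`Δ ≥ 3` and no isolated vertices, and suppose `n ≡ 0 (mod Δ−1)`. Then
`F(B) = Σ_v d(v)³ ≤ (Δ² + Δ + 2)·n + 26`. -/
theorem forgotten_index_bicyclic_mod_zero {V : Type*} [Fintype V] [DecidableEq V]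
    (B : SimpleGraph V) [DecidableRel B.Adj] (n Δ : ℕ)
    (hcard : Fintype.card V = n)
    (hedges : B.edgeFinset.card = n + 1)
    (hΔ : B.maxDegree = Δ) (hΔ3 : 3 ≤ Δ)
    (hmin : ∀ v : V, 0 < B.degree v)
    (hmod : n % (Δ - 1) = 0) :
    ∑ v, B.degree v ^ 3 ≤ (Δ ^ 2 + Δ + 2) * n + 26 := by
  classical
  set K := Δ ^ 2 + Δ + 1 with hK
  set m : V → ℕ := fun v => B.degree v - 1 with hm
  have hdm : ∀ v, B.degree v = m v + 1 := fun v => by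
    have := hmin v; simp only [hm]; omega
  have hdΔ : ∀ v, B.degree v ≤ Δ := fun v => hΔ ▸ B.degree_le_maxDegree v
  have hnuniv : (Finset.univ : Finset V).card = n := by simpa using hcard
  have hsum : ∑ v, B.degree v = 2 * (n + 1) := by
    rw [B.sum_degrees_eq_twice_card_edges, hedges]
  have hsum1 : ∑ v, m v = n + 2 := by
    have h1 : ∑ v, (m v + 1) = 2 * (n + 1) := by
      rw [← hsum]; exact Finset.sum_congr rfl fun v _ => (hdm v).symm
    rw [Finset.sum_add_distrib, Finset.sum_const, hnuniv, smul_eq_mul, mul_one] at h1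
    omega
  -- pointwise bound 1
  have lem1 : ∀ v, B.degree v ^ 3 ≤ K * m v + 1 := by
    intro v
    have h2 := hdΔ v
    have h1 := hdm v
    rw [h1]
    have hx : m v + 1 ≤ Δ := by omega
    have h2' : (m v + 1) ^ 2 ≤ Δ ^ 2 := Nat.pow_le_pow_left hx 2
    nlinarith [h2', hx]
  -- pointwise bound 2 (middle degrees give slack Δ²+Δ−12)
  have lem2 : ∀ x : ℕ, 1 ≤ x → x + 2 ≤ Δ →
      (x + 1) ^ 3 + Δ ^ 2 + Δ ≤ K * x + 13 := by
    intro x h1 h2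
    rw [hK]
    zify
    nlinarith [mul_nonneg (mul_nonneg (by omega : (0:ℤ) ≤ (x:ℤ) - 1)
        (by omega : (0:ℤ) ≤ (Δ:ℤ) - 2 - x)) (by omega : (0:ℤ) ≤ (x:ℤ)),
      mul_nonneg (mul_nonneg (by omega : (0:ℤ) ≤ (x:ℤ) - 1)
        (by omega : (0:ℤ) ≤ (Δ:ℤ) - 2 - x)) (by omega : (0:ℤ) ≤ (Δ:ℤ)),
      mul_nonneg (by omega : (0:ℤ) ≤ (x:ℤ) - 1) (by omega : (0:ℤ) ≤ (Δ:ℤ) - 2 - x)]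
  have hTotal : ∑ v, (K * m v + 1) = K * (n + 2) + n := by
    rw [Finset.sum_add_distrib, ← Finset.mul_sum, hsum1, Finset.sum_const, hnuniv,
      smul_eq_mul, mul_one]
  rcases Nat.lt_or_ge Δ 4 with hΔ4 | hΔ4
  · -- Δ = 3
    have hΔ' : Δ = 3 := by omega
    subst hΔ'
    have h := Finset.sum_le_sum (fun v (_ : v ∈ Finset.univ) => lem1 v)
    rw [hTotal] at h
    omega
  · -- Δ ≥ 4
    set A : Finset V := Finset.univ.filter
      (fun v => 2 ≤ B.degree v ∧ B.degree v ≤ Δ - 1) with hA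
    rcases Nat.lt_or_ge A.card 2 with hcA | hcA
    · -- at most one "middle" vertex: mod argument forces one vertex of degree 3
      have hmemA : ∀ v ∈ A, m v ≤ Δ - 2 ∧ 1 ≤ m v := by
        intro v hv
        simp only [hA, Finset.mem_filter, Finset.mem_univ, true_and] at hv
        have := hdm v; omega
      have hnotA : ∀ v ∉ A, m v = 0 ∨ m v = Δ - 1 := by
        intro v hv
        simp only [hA, Finset.mem_filter, Finset.mem_univ, true_and, not_and, not_le] at hv
        have h1 := hmin v; have h2 := hdΔ v; have h3 := hdm v
        omega
      have hdvd : (Δ - 1) ∣ ∑ v ∈ Finset.univ \ A, m v := by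
        refine Finset.dvd_sum fun v hv => ?_
        rcases hnotA v (Finset.mem_sdiff.mp hv).2 with h | h
        · simp [h]
        · simp [h]
      set T := ∑ v ∈ A, m v with hT
      have hsplit : ∑ v ∈ Finset.univ \ A, m v + T = n + 2 := by
        rw [hT, Finset.sum_sdiff (Finset.subset_univ A), hsum1]
      obtain ⟨k, hk⟩ := hdvd
      obtain ⟨j, hj⟩ := Nat.dvd_of_mod_eq_zero hmod
      have hTle : T ≤ Δ - 2 := by
        have h1 : T ≤ A.card * (Δ - 2) := by
          rw [hT]
          calc ∑ v ∈ A, m v ≤ ∑ v ∈ A, (Δ - 2) :=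
                Finset.sum_le_sum fun v hv => (hmemA v hv).1
            _ = A.card * (Δ - 2) := by rw [Finset.sum_const, smul_eq_mul]
        have h2 : A.card * (Δ - 2) ≤ 1 * (Δ - 2) :=
          Nat.mul_le_mul_right _ (by omega)
        omega
      have hT2 : T = 2 := by
        have heq : (Δ - 1) * k + T = (Δ - 1) * j + 2 := by
          rw [← hk, hsplit, ← hj]
        have h1 : ((Δ - 1) * k + T) % (Δ - 1) = ((Δ - 1) * j + 2) % (Δ - 1) := by
          rw [heq]
        rw [Nat.mul_add_mod, Nat.mul_add_mod,
          Nat.mod_eq_of_lt (by omega : T < Δ - 1),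
          Nat.mod_eq_of_lt (by omega : 2 < Δ - 1)] at h1
        exact h1
      have hAne : A.Nonempty := by
        by_contra h
        rw [Finset.not_nonempty_iff_eq_empty] at h
        rw [hT, h, Finset.sum_empty] at hT2
        omega
      have hc1 : A.card = 1 := by
        have := Finset.card_pos.mpr hAne; omega
      obtain ⟨v₀, hv0⟩ := Finset.card_eq_one.mp hc1
      have hm0 : m v₀ = 2 := by
        rw [hT, hv0, Finset.sum_singleton] at hT2; exact hT2
      have hd0 : B.degree v₀ = 3 := by have := hdm v₀; omega
      have herase : ∑ v ∈ Finset.univ.erase v₀, m v = n := by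
        have h := Finset.sum_erase_add Finset.univ m (Finset.mem_univ v₀)
        rw [hsum1] at h; omega
      have hcarderase : (Finset.univ.erase v₀).card = n - 1 := by
        rw [Finset.card_erase_of_mem (Finset.mem_univ v₀), hnuniv]
      have hn1 : 1 ≤ n := by
        rw [← hnuniv]; exact Finset.card_pos.mpr ⟨v₀, Finset.mem_univ v₀⟩
      have hbound : ∑ v ∈ Finset.univ.erase v₀, B.degree v ^ 3 ≤ K * n + (n - 1) := by
        calc ∑ v ∈ Finset.univ.erase v₀, B.degree v ^ 3
            ≤ ∑ v ∈ Finset.univ.erase v₀, (K * m v + 1) :=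
              Finset.sum_le_sum fun v _ => lem1 v
          _ = K * n + (n - 1) := by
              rw [Finset.sum_add_distrib, ← Finset.mul_sum, herase, Finset.sum_const,
                hcarderase, smul_eq_mul, mul_one]
      have htot := Finset.sum_erase_add Finset.univ (fun v => B.degree v ^ 3)
        (Finset.mem_univ v₀)
      have h27 : B.degree v₀ ^ 3 = 27 := by rw [hd0]; norm_num
      have hring : (Δ ^ 2 + Δ + 2) * n = K * n + n := by rw [hK]; ring
      omega
    · -- at least two middle vertices
      obtain ⟨v₁, hv₁, v₂, hv₂, hne⟩ := Finset.one_lt_card.mp (by omega : 1 < A.card)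
      set P : Finset V := {v₁, v₂} with hP
      have hPcard : P.card = 2 := by
        rw [hP, Finset.card_insert_of_notMem (by simp [hne]), Finset.card_singleton]
      have hPA : ∀ v ∈ P, v ∈ A := by
        intro v hv
        rcases Finset.mem_insert.mp hv with h | h
        · exact h ▸ hv₁
        · exact (Finset.mem_singleton.mp h) ▸ hv₂
      have key : ∀ v, B.degree v ^ 3 + (if v ∈ P then Δ ^ 2 + Δ else 0)
          ≤ K * m v + 1 + (if v ∈ P then 12 else 0) := by
        intro v
        by_cases hv : v ∈ P
        · simp only [hv, if_true]
          have hvA := hPA v hv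
          simp only [hA, Finset.mem_filter, Finset.mem_univ, true_and] at hvA
          have hdv := hdm v
          have h := lem2 (m v) (by omega) (by omega)
          rw [hdv]
          omega
        · simp only [hv, if_false]
          have := lem1 v
          omega
      have hsumkey := Finset.sum_le_sum (fun v (_ : v ∈ Finset.univ) => key v)
      have h1 : ∑ v, (B.degree v ^ 3 + (if v ∈ P then Δ ^ 2 + Δ else 0))
          = ∑ v, B.degree v ^ 3 + 2 * (Δ ^ 2 + Δ) := by
        rw [Finset.sum_add_distrib, Finset.sum_ite_mem, Finset.univ_inter,
          Finset.sum_const, hPcard, smul_eq_mul]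
      have h2 : ∑ v, (K * m v + 1 + (if v ∈ P then 12 else 0))
          = K * (n + 2) + n + 24 := by
        rw [Finset.sum_add_distrib, hTotal, Finset.sum_ite_mem, Finset.univ_inter,
          Finset.sum_const, hPcard, smul_eq_mul]
      rw [h1, h2] at hsumkey
      have hring : K * (n + 2) + n + 24 = (Δ ^ 2 + Δ + 2) * n + 26 + 2 * (Δ ^ 2 + Δ) := by
        rw [hK]; ring
      omega
end

section
/- Let B be a bicyclic graph of order n with maximum degree Δ and no isolated vertices, and let p be an integer with 2 ≤ p < Δ − 3 such that n ≡ p (mod Δ−1). Then the forgotten topological index of B satisfies F(B) ≤ (Δ² + Δ + 2)·n − p·(Δ² + Δ + 2) + p³ + 9p² + 28p + 26. -/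
lemma cube_piecewise (x r D : ℤ) (h1 : 1 ≤ x) (hxD : x ≤ D) (hr1 : 1 ≤ r) :
    x^3 ≤ (r^2+r+1)*x - (r^2+r) + (D^2+D*r-r-1) * max (x - r) 0 := by
  rcases le_or_gt x r with h | h
  · rw [max_eq_right (by linarith)]
    nlinarith [mul_nonneg (mul_nonneg (by linarith : (0:ℤ) ≤ x - 1) (by linarith : (0:ℤ) ≤ r - x)) (by linarith : (0:ℤ) ≤ r + x + 1)]
  · rw [max_eq_left (by linarith)]
    nlinarith [mul_nonneg (mul_nonneg (by linarith : (0:ℤ) ≤ x - r) (by linarith : (0:ℤ) ≤ D - x)) (by linarith : (0:ℤ) ≤ x + r + D)]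

/-- Let `B` be a bicyclic graph of order `n` with maximum degree `Δ`
and no isolated vertices, and let `p` satisfy `2 ≤ p < Δ − 3` and `n ≡ p (mod Δ−1)`.
Then `F(B) = Σ_v d(v)³ ≤ (Δ² + Δ + 2)·n − p·(Δ² + Δ + 2) + p³ + 9p² + 28p + 26`. -/
theorem forgotten_index_bicyclic_mod_p {V : Type*} [Fintype V] [DecidableEq V]
    (B : SimpleGraph V) [DecidableRel B.Adj] (n Δ p : ℕ)
    (hcard : Fintype.card V = n)
    (hedges : B.edgeFinset.card = n + 1)
    (hΔ : B.maxDegree = Δ)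
    (hmin : ∀ v : V, 0 < B.degree v)
    (hp2 : 2 ≤ p) (hpΔ : p + 3 < Δ)
    (hmod : n % (Δ - 1) = p) :
    (∑ v, (B.degree v : ℤ) ^ 3)
      ≤ ((Δ : ℤ) ^ 2 + Δ + 2) * n - p * ((Δ : ℤ) ^ 2 + Δ + 2)
          + (p : ℤ) ^ 3 + 9 * (p : ℤ) ^ 2 + 28 * p + 26 := by
  have hΔ6 : 6 ≤ Δ := by omega
  -- degree facts
  have hd1 : ∀ v : V, (1:ℤ) ≤ (B.degree v : ℤ) := fun v => by exact_mod_cast hmin v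
  have hdΔ : ∀ v : V, (B.degree v : ℤ) ≤ (Δ:ℤ) := fun v => by
    exact_mod_cast hΔ ▸ B.degree_le_maxDegree v
  -- handshake
  have hsum : (∑ v, (B.degree v : ℤ)) = 2 * (n + 1) := by
    have := B.sum_degrees_eq_twice_card_edges
    rw [hedges] at this
    exact_mod_cast this
  -- mod ⇒ n = q(Δ-1)+p
  obtain ⟨q, hq⟩ : ∃ q : ℕ, n = q * (Δ - 1) + p := by
    refine ⟨n / (Δ - 1), ?_⟩
    conv_lhs => rw [← Nat.div_add_mod n (Δ - 1)]
    rw [hmod, Nat.mul_comm]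
  have hqZ : (n : ℤ) = q * ((Δ:ℤ) - 1) + p := by
    have h1 : (1:ℕ) ≤ Δ := by omega
    zify [h1] at hq; linarith
  -- abbreviations
  set r : ℤ := (p:ℤ) + 3 with hrdef
  have hr1 : (1:ℤ) ≤ r := by rw [hrdef]; linarith [Int.natCast_nonneg p]
  have hrΔ : r + 1 ≤ (Δ:ℤ) := by
    have : (p:ℤ) + 3 < Δ := by exact_mod_cast hpΔ
    omega
  set c : ℤ := (Δ:ℤ)^2 + (Δ:ℤ)*r - r - 1 with hcdef
  have hc0 : 0 ≤ c := by nlinarith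
  -- the heavy set
  set K : Finset V := Finset.univ.filter (fun v => r < (B.degree v : ℤ)) with hK
  set k : ℤ := (K.card : ℤ) with hk
  have hTeq : (∑ v, max ((B.degree v : ℤ) - r) 0) = ∑ v ∈ K, ((B.degree v : ℤ) - r) := by
    rw [← Finset.sum_filter_add_sum_filter_not Finset.univ (fun v => r < (B.degree v : ℤ))]
    have h2 : ∑ v ∈ Finset.univ.filter (fun v => ¬ r < (B.degree v : ℤ)),
        max ((B.degree v : ℤ) - r) 0 = 0 := by
      apply Finset.sum_eq_zero
      intro v hv
      simp only [Finset.mem_filter, not_lt] at hv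
      exact max_eq_right (by linarith [hv.2])
    rw [h2, add_zero]
    apply Finset.sum_congr rfl
    intro v hv
    simp only [hK, Finset.mem_filter] at hv
    exact max_eq_left (by linarith [hv.2])
  -- bound on T
  have hT : (∑ v ∈ K, ((B.degree v : ℤ) - r)) ≤ (q:ℤ) * ((Δ:ℤ) - r) := by
    rcases le_or_gt k q with hkq | hkq
    · calc (∑ v ∈ K, ((B.degree v : ℤ) - r)) ≤ ∑ v ∈ K, ((Δ:ℤ) - r) :=
            Finset.sum_le_sum (fun v _ => by linarith [hdΔ v])
      _ = k * ((Δ:ℤ) - r) := by rw [Finset.sum_const, hk]; push_cast; ring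
      _ ≤ (q:ℤ) * ((Δ:ℤ) - r) := by
          apply mul_le_mul_of_nonneg_right hkq (by linarith)
    · -- k ≥ q+1
      have hcompl : (∑ v ∈ Kᶜ, (B.degree v : ℤ)) ≥ (n:ℤ) - k := by
        have : (∑ v ∈ Kᶜ, (B.degree v : ℤ)) ≥ ∑ v ∈ Kᶜ, (1:ℤ) :=
          Finset.sum_le_sum (fun v _ => hd1 v)
        have hcard' : (Kᶜ.card : ℤ) = (n:ℤ) - k := by
          rw [Finset.card_compl, hcard]
          have : K.card ≤ n := by rw [← hcard]; exact K.card_le_univ.trans_eq (by simp)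
          push_cast [Nat.cast_sub this]
          rfl
        simpa [hcard'] using this
      have hKsum : (∑ v ∈ K, (B.degree v : ℤ)) ≤ (n:ℤ) + 2 + k := by
        have hsplit : (∑ v ∈ K, (B.degree v : ℤ)) + (∑ v ∈ Kᶜ, (B.degree v : ℤ)) = 2 * (n+1) := by
          rw [Finset.sum_add_sum_compl]; exact hsum
        linarith
      have expand : (∑ v ∈ K, ((B.degree v : ℤ) - r)) = (∑ v ∈ K, (B.degree v : ℤ)) - k * r := by
        rw [Finset.sum_sub_distrib, Finset.sum_const, hk]; push_cast; ring
      have hk1 : (q:ℤ) + 1 ≤ k := by exact_mod_cast hkq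
      -- T ≤ n+2 - k(r-1) ≤ n+2 - (q+1)(r-1) = q(Δ-r)
      have hnr : (n:ℤ) + 2 = q * ((Δ:ℤ) - 1) + r - 1 := by rw [hqZ, hrdef]; ring
      nlinarith [mul_le_mul_of_nonneg_right hk1 (by linarith : (0:ℤ) ≤ r - 1)]
  -- pointwise sum bound
  have hmain : (∑ v, (B.degree v : ℤ) ^ 3)
      ≤ (r^2+r+1) * (2*(n+1)) - n*(r^2+r) + c * ((q:ℤ) * ((Δ:ℤ) - r)) := by
    calc (∑ v, (B.degree v : ℤ) ^ 3)
        ≤ ∑ v, ((r^2+r+1)*(B.degree v : ℤ) - (r^2+r) + c * max ((B.degree v : ℤ) - r) 0) :=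
          Finset.sum_le_sum (fun v _ => cube_piecewise _ r _ (hd1 v) (hdΔ v) hr1)
      _ = (r^2+r+1) * (∑ v, (B.degree v : ℤ)) - (Fintype.card V) * (r^2+r)
            + c * (∑ v, max ((B.degree v : ℤ) - r) 0) := by
          rw [Finset.sum_add_distrib, Finset.sum_sub_distrib, ← Finset.mul_sum,
            ← Finset.mul_sum, Finset.sum_const]
          simp [Finset.card_univ, nsmul_eq_mul]
      _ ≤ (r^2+r+1) * (2*(n+1)) - n*(r^2+r) + c * ((q:ℤ) * ((Δ:ℤ) - r)) := by
          rw [hsum, hcard, hTeq]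
          have := mul_le_mul_of_nonneg_left hT hc0
          linarith
  -- final algebra
  have hfinal : (r^2+r+1) * (2*((n:ℤ)+1)) - n*(r^2+r) + c * ((q:ℤ) * ((Δ:ℤ) - r))
      = ((Δ : ℤ) ^ 2 + Δ + 2) * n - p * ((Δ : ℤ) ^ 2 + Δ + 2)
          + (p : ℤ) ^ 3 + 9 * (p : ℤ) ^ 2 + 28 * p + 26 := by
    rw [hcdef, hrdef]
    rw [hqZ]; ring
  linarith [hmain, hfinal.le]
end

section
/- Let Δ ≥ 3 and k ≥ 1 be integers and set n = (Δ−1)·k. If n₁, n₂, …, n_Δ are nonnegative integers satisfying n₁ + n₂ + … + n_Δ = n and n₁ + 2n₂ + 3n₃ + … + Δ·n_Δ = 2n + 2, then Σ_{i=1}^{Δ} i³·n_i ≤ (Δ² + Δ + 2)·n + 26. -/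
/-- Let `Δ ≥ 3` and `k ≥ 1` with `n = (Δ−1)·k`. If nonnegative
integers `n₁, …, n_Δ` satisfy `Σ nᵢ = n` and `Σ i·nᵢ = 2n + 2`, then
`Σ i³·nᵢ ≤ (Δ² + Δ + 2)·n + 26`. -/
theorem degree_sequence_bound_mod_zero (Δ k n : ℕ) (hΔ : 3 ≤ Δ) (hk : 1 ≤ k)
    (hn : n = (Δ - 1) * k) (a : ℕ → ℕ)
    (h1 : ∑ i ∈ Finset.Icc 1 Δ, a i = n)
    (h2 : ∑ i ∈ Finset.Icc 1 Δ, i * a i = 2 * n + 2) :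
    ∑ i ∈ Finset.Icc 1 Δ, i ^ 3 * a i ≤ (Δ ^ 2 + Δ + 2) * n + 26 := by
  set P := Δ ^ 2 + Δ + 1 with hP
  set s := Finset.Icc 1 Δ with hs
  set w : ℕ → ℕ := fun i => (i - 1) * ((Δ - i) * (Δ + i + 1)) with hw
  -- Σ (i-1)*a = n+2
  have hE : ∑ i ∈ s, (i - 1) * a i = n + 2 := by
    have e : ∑ i ∈ s, i * a i = ∑ i ∈ s, ((i - 1) * a i + a i) := by
      apply Finset.sum_congr rfl
      intro i hi
      have h1i : 1 ≤ i := (Finset.mem_Icc.mp hi).1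
      have e1 : i - 1 + 1 = i := by omega
      calc i * a i = (i - 1 + 1) * a i := by rw [e1]
        _ = (i - 1) * a i + a i := by ring
    rw [e, Finset.sum_add_distrib, h1] at h2
    omega
  -- key identity
  have hkey : (∑ i ∈ s, i ^ 3 * a i) + ∑ i ∈ s, w i * a i = n + P * (n + 2) := by
    rw [← Finset.sum_add_distrib]
    have e : ∀ i ∈ s, i ^ 3 * a i + w i * a i = a i + P * ((i - 1) * a i) := by
      intro i hi
      obtain ⟨h1i, h2i⟩ := Finset.mem_Icc.mp hi
      obtain ⟨j, rfl⟩ : ∃ j, i = j + 1 := ⟨i - 1, by omega⟩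
      obtain ⟨d, rfl⟩ : ∃ d, Δ = j + 1 + d := ⟨Δ - (j + 1), by omega⟩
      have e1 : j + 1 - 1 = j := by omega
      have e2 : j + 1 + d - (j + 1) = d := by omega
      simp only [hw, hP, e1, e2]
      ring
    rw [Finset.sum_congr rfl e, Finset.sum_add_distrib, ← Finset.mul_sum, h1, hE]
  suffices hW : 2 * P ≤ 26 + ∑ i ∈ s, w i * a i by
    have e3 : P * (n + 2) = P * n + 2 * P := by ring
    have e4 : (Δ ^ 2 + Δ + 2) * n = P * n + n := by rw [hP]; ring
    omega
  set t := Finset.Icc 2 (Δ - 1) with ht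
  have hWt : ∑ i ∈ t, w i * a i ≤ ∑ i ∈ s, w i * a i :=
    Finset.sum_le_sum_of_subset (Finset.Icc_subset_Icc (by omega) (by omega))
  set M := ∑ i ∈ t, (i - 1) * a i with hM
  -- M + (Δ-1) * a Δ = n + 2
  have hMa : M + (Δ - 1) * a Δ = n + 2 := by
    have h0 : ∑ i ∈ s, (i - 1) * a i = ∑ i ∈ Finset.Icc 2 Δ, (i - 1) * a i := by
      symm
      apply Finset.sum_subset (Finset.Icc_subset_Icc (by omega) le_rfl)
      intro x hx hnx
      simp only [Finset.mem_Icc] at hx hnx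
      have : x = 1 := by omega
      simp [this]
    have h3 : Finset.Icc 2 Δ = Finset.Icc 2 ((Δ - 1) + 1) := by congr 1; omega
    have h4 : Δ - 1 + 1 = Δ := by omega
    rw [h0, h3, Finset.sum_Icc_succ_top (by omega), h4] at hE
    rw [← hE, hM]
  rcases eq_or_lt_of_le hΔ with hΔ3 | hΔ4
  · -- Δ = 3
    have : P = 13 := by rw [hP, ← hΔ3]; norm_num
    omega
  -- Δ ≥ 4
  have hxk : a Δ ≤ k := by
    by_contra h
    push_neg at h
    have h5 : (Δ - 1) * (k + 1) ≤ (Δ - 1) * a Δ := Nat.mul_le_mul_left _ h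
    have h6 : (Δ - 1) * (k + 1) = (Δ - 1) * k + (Δ - 1) := by ring
    omega
  obtain ⟨q, hq⟩ : ∃ q, M = (Δ - 1) * q + 2 := by
    refine ⟨k - a Δ, ?_⟩
    have h5 : (Δ - 1) * k = (Δ - 1) * a Δ + (Δ - 1) * (k - a Δ) := by
      rw [← Nat.mul_add]
      congr 1
      omega
    omega
  rcases Nat.eq_zero_or_pos q with hq0 | hq1
  · -- M = 2 case
    have hM2 : M = 2 := by rw [hq, hq0]; ring
    have hpt : ∀ i ∈ t, (Δ ^ 2 + Δ) * ((i - 1) * a i) ≤ w i * a i + 12 * ((i - 1) * a i) := by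
      intro i hi
      obtain ⟨h2i, hiD⟩ := Finset.mem_Icc.mp hi
      rcases Nat.eq_zero_or_pos (a i) with h0 | h0
      · simp [h0]
      have hle : (i - 1) * a i ≤ M :=
        hM ▸ Finset.single_le_sum (f := fun i => (i - 1) * a i) (fun _ _ => Nat.zero_le _) hi
      have hi1 : i - 1 ≤ (i - 1) * a i := Nat.le_mul_of_pos_right _ h0
      have hi3 : i ≤ 3 := by omega
      have hcoef : (Δ ^ 2 + Δ) * (i - 1) ≤ w i + 12 * (i - 1) := by
        obtain ⟨d, rfl⟩ : ∃ d, Δ = d + 4 := ⟨Δ - 4, by omega⟩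
        interval_cases i
        · have e1 : (2:ℕ) - 1 = 1 := rfl
          have e2 : d + 4 - 2 = d + 2 := by omega
          simp only [hw, e1, e2]
          nlinarith
        · have e1 : (3:ℕ) - 1 = 2 := rfl
          have e2 : d + 4 - 3 = d + 1 := by omega
          simp only [hw, e1, e2]
          nlinarith
      calc (Δ ^ 2 + Δ) * ((i - 1) * a i) = ((Δ ^ 2 + Δ) * (i - 1)) * a i := by ring
        _ ≤ (w i + 12 * (i - 1)) * a i := Nat.mul_le_mul_right _ hcoef
        _ = w i * a i + 12 * ((i - 1) * a i) := by ring
    have hsum := Finset.sum_le_sum hpt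
    rw [← Finset.mul_sum, Finset.sum_add_distrib, ← Finset.mul_sum, ← hM, hM2] at hsum
    have hPe : 2 * P = (Δ ^ 2 + Δ) * 2 + 2 := by rw [hP]; ring
    omega
  · -- M ≥ Δ + 1 case
    have hpt : ∀ i ∈ t, (2 * Δ) * ((i - 1) * a i) ≤ w i * a i := by
      intro i hi
      obtain ⟨h2i, hiD⟩ := Finset.mem_Icc.mp hi
      have hcoef : (2 * Δ) * (i - 1) ≤ w i := by
        obtain ⟨j, rfl⟩ : ∃ j, i = j + 2 := ⟨i - 2, by omega⟩
        obtain ⟨f, hf⟩ : ∃ f, Δ = j + f + 3 := ⟨Δ - j - 3, by omega⟩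
        have e1 : j + 2 - 1 = j + 1 := by omega
        have e2 : Δ - (j + 2) = f + 1 := by omega
        simp only [hw, e1, e2]
        have e4 : 2 * Δ ≤ (f + 1) * (Δ + (j + 2) + 1) := by
          have e5 : (f + 1) * (Δ + (j + 2) + 1) = (Δ + (j + 2) + 1) + f * (Δ + (j + 2) + 1) := by
            ring
          have e6 : f ≤ f * (Δ + (j + 2) + 1) := Nat.le_mul_of_pos_right _ (by omega)
          omega
        calc 2 * Δ * (j + 1) = (j + 1) * (2 * Δ) := by ring
          _ ≤ (j + 1) * ((f + 1) * (Δ + (j + 2) + 1)) := Nat.mul_le_mul_left _ e4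
      calc (2 * Δ) * ((i - 1) * a i) = ((2 * Δ) * (i - 1)) * a i := by ring
        _ ≤ w i * a i := Nat.mul_le_mul_right _ hcoef
    have hsum := Finset.sum_le_sum hpt
    rw [← Finset.mul_sum, ← hM] at hsum
    have hMge : Δ + 1 ≤ M := by
      have : Δ - 1 ≤ (Δ - 1) * q := Nat.le_mul_of_pos_right _ hq1
      omega
    have h7 : 2 * Δ * (Δ + 1) ≤ 2 * Δ * M := Nat.mul_le_mul_left _ hMge
    have hPe : 2 * P = 2 * Δ * (Δ + 1) + 2 := by rw [hP]; ring
    omega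
end

section
/- Let Δ, k, p be integers with k ≥ 1, 2 ≤ p < Δ − 3, and set n = (Δ−1)·k + p. If n₁, n₂, …, n_Δ are nonnegative integers satisfying n₁ + n₂ + … + n_Δ = n and n₁ + 2n₂ + 3n₃ + … + Δ·n_Δ = 2n + 2, then Σ_{i=1}^{Δ} i³·n_i ≤ (Δ² + Δ + 2)·n − p·(Δ² + Δ + 2) + p³ + 9p² + 28p + 26. -/
namespace DegSeqAux

/-- The weight `F D e = e (D-1-e) (D+2+e)`, i.e. `(i-1)(D-i)(D+i+1)` with `e = i-1`. -/
def F (D e : ℤ) : ℤ := e * (D - 1 - e) * (D + 2 + e)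

lemma F_subadd (D a b : ℤ) (ha : 0 ≤ a) (hb : 0 ≤ b) :
    F D (a + b) ≤ F D a + F D b := by
  unfold F
  nlinarith [mul_nonneg ha hb, mul_nonneg (mul_nonneg ha hb) ha,
    mul_nonneg (mul_nonneg ha hb) hb]

lemma F_merge (D a b : ℤ) (hD : 6 ≤ D) (ha0 : 0 ≤ a) (ha : a ≤ D - 2)
    (hb0 : 0 ≤ b) (hb : b ≤ D - 2) (hab : D - 1 ≤ a + b) :
    F D (a + b - (D - 1)) ≤ F D a + F D b := by
  unfold F
  nlinarith [mul_nonneg (sub_nonneg.2 ha) (sub_nonneg.2 hb),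
    mul_nonneg (mul_nonneg (sub_nonneg.2 ha) (sub_nonneg.2 hb)) (by linarith : (0:ℤ) ≤ a + b - (D-1)),
    mul_nonneg (mul_nonneg (sub_nonneg.2 ha) (sub_nonneg.2 hb)) (by linarith : (0:ℤ) ≤ D - 6),
    mul_nonneg ha0 hb0,
    mul_nonneg (sub_nonneg.2 ha) hb0, mul_nonneg ha0 (sub_nonneg.2 hb)]

lemma dvd_small (q x : ℤ) (h : q ∣ x) (h1 : -q < x) (h2 : x < q) : x = 0 := by
  rcases h with ⟨c, rfl⟩
  have hq : 0 < q := by nlinarith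
  rcases lt_trichotomy c 0 with hc | hc | hc
  · nlinarith [mul_nonneg hq.le (by linarith : 0 ≤ -c - 1)]
  · simp [hc]
  · nlinarith [mul_nonneg hq.le (by linarith : 0 ≤ c - 1)]

lemma key (D p : ℤ) (hp : 2 ≤ p) (hD : p + 4 ≤ D) :
    ∀ (m : ℕ) (s : Multiset ℤ), s.card = m →
      (∀ e ∈ s, 0 ≤ e ∧ e ≤ D - 2) →
      ((D - 1) ∣ s.sum - (p + 2)) →
      F D (p + 2) ≤ (s.map (F D)).sum := by
  intro m
  induction m with
  | zero =>
      intro s hcard hmem hdvd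
      rw [Multiset.card_eq_zero] at hcard
      subst hcard
      exfalso
      have h0 : Multiset.sum (0 : Multiset ℤ) = 0 := rfl
      rw [h0] at hdvd
      have := dvd_small (D-1) (0 - (p+2)) hdvd (by linarith) (by linarith)
      linarith
  | succ m ih =>
      intro s hcard hmem hdvd
      have hs0 : s ≠ 0 := by
        intro h; subst h; simp at hcard
      obtain ⟨x, hx⟩ := Multiset.exists_mem_of_ne_zero hs0
      obtain ⟨t, rfl⟩ : ∃ t, s = x ::ₘ t := ⟨s.erase x, (Multiset.cons_erase hx).symm⟩
      have hxb := hmem x (Multiset.mem_cons_self x t)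
      rcases Nat.eq_zero_or_pos m with hm | hm
      · -- singleton case
        subst hm
        have ht : t = 0 := by
          rw [Multiset.card_eq_zero.symm]
          simpa using hcard
        subst ht
        have hsum : (x ::ₘ (0:Multiset ℤ)).sum = x := by simp
        rw [hsum] at hdvd
        have hx0 : x - (p + 2) = 0 :=
          dvd_small (D-1) _ hdvd (by linarith [hxb.1]) (by linarith [hxb.2])
        have : x = p + 2 := by linarith
        subst this
        simp [F]
      · -- at least two elements
        have ht0 : t ≠ 0 := by
          intro h; subst h; simp at hcard; omega
        obtain ⟨y, hy⟩ := Multiset.exists_mem_of_ne_zero ht0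
        obtain ⟨u, rfl⟩ : ∃ u, t = y ::ₘ u := ⟨t.erase y, (Multiset.cons_erase hy).symm⟩
        have hyb := hmem y (Multiset.mem_cons_of_mem (Multiset.mem_cons_self y u))
        have hucard : (u.card : ℕ) = m - 1 := by
          simp at hcard; omega
        have humem : ∀ e ∈ u, 0 ≤ e ∧ e ≤ D - 2 := fun e he =>
          hmem e (Multiset.mem_cons_of_mem (Multiset.mem_cons_of_mem he))
        have hssum : (x ::ₘ y ::ₘ u).sum = x + y + u.sum := by
          simp [Multiset.sum_cons]; ring
        rw [hssum] at hdvd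
        by_cases hxy : x + y ≤ D - 2
        · -- merge without wraparound
          have h1 := ih ((x + y) ::ₘ u) (by simp; omega)
            (by
              intro e he
              rcases Multiset.mem_cons.1 he with rfl | he
              · exact ⟨by linarith [hxb.1, hyb.1], hxy⟩
              · exact humem e he)
            (by
              have : ((x + y) ::ₘ u).sum = x + y + u.sum := by simp
              rw [this]; exact hdvd)
          have h2 := F_subadd D x y hxb.1 hyb.1
          simp only [Multiset.map_cons, Multiset.sum_cons] at h1 ⊢
          linarith
        · -- merge with wraparound
          push_neg at hxy
          have hxy' : D - 1 ≤ x + y := by linarith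
          have h1 := ih ((x + y - (D-1)) ::ₘ u) (by simp; omega)
            (by
              intro e he
              rcases Multiset.mem_cons.1 he with rfl | he
              · constructor <;> [linarith; linarith [hxb.2, hyb.2]]
              · exact humem e he)
            (by
              have heq : ((x + y - (D-1)) ::ₘ u).sum - (p + 2)
                  = (x + y + u.sum - (p + 2)) - (D - 1) * 1 := by
                simp [Multiset.sum_cons]; ring
              rw [heq]
              exact dvd_sub hdvd (Dvd.intro 1 rfl))
          have h2 := F_merge D x y (by linarith) hxb.1 hxb.2 hyb.1 hyb.2 hxy'
          simp only [Multiset.map_cons, Multiset.sum_cons] at h1 ⊢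
          linarith

end DegSeqAux

open DegSeqAux

/-- Let `k ≥ 1`, `2 ≤ p < Δ − 3`, and `n = (Δ−1)·k + p`. If
nonnegative integers `n₁, …, n_Δ` satisfy `Σ nᵢ = n` and `Σ i·nᵢ = 2n + 2`, then
`Σ i³·nᵢ ≤ (Δ² + Δ + 2)·n − p·(Δ² + Δ + 2) + p³ + 9p² + 28p + 26`. -/
theorem degree_sequence_bound_mod_p (Δ k p n : ℕ) (hk : 1 ≤ k)
    (hp2 : 2 ≤ p) (hpΔ : p + 3 < Δ)
    (hn : n = (Δ - 1) * k + p) (a : ℕ → ℕ)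
    (h1 : ∑ i ∈ Finset.Icc 1 Δ, a i = n)
    (h2 : ∑ i ∈ Finset.Icc 1 Δ, i * a i = 2 * n + 2) :
    (∑ i ∈ Finset.Icc 1 Δ, (i : ℤ) ^ 3 * a i)
      ≤ ((Δ : ℤ) ^ 2 + Δ + 2) * n - p * ((Δ : ℤ) ^ 2 + Δ + 2)
          + (p : ℤ) ^ 3 + 9 * (p : ℤ) ^ 2 + 28 * p + 26 := by
  have hΔ6 : 6 ≤ Δ := by omega
  set D : ℤ := (Δ : ℤ) with hD
  -- splitting Icc 1 Δ
  have hsplit : Finset.Icc 1 Δ = insert 1 (insert Δ (Finset.Icc 2 (Δ-1))) := by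
    ext x; simp only [Finset.mem_Icc, Finset.mem_insert]; omega
  have sum_split : ∀ g : ℕ → ℤ,
      ∑ i ∈ Finset.Icc 1 Δ, g i = g 1 + g Δ + ∑ i ∈ Finset.Icc 2 (Δ-1), g i := by
    intro g
    rw [hsplit, Finset.sum_insert (by simp [Finset.mem_Icc]; omega),
      Finset.sum_insert (by simp [Finset.mem_Icc]; omega)]
    ring
  -- integer versions of hypotheses
  have H1 : ∑ i ∈ Finset.Icc 1 Δ, (a i : ℤ) = (n : ℤ) := by exact_mod_cast h1
  have H2 : ∑ i ∈ Finset.Icc 1 Δ, (i : ℤ) * (a i : ℤ) = 2 * (n : ℤ) + 2 := by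
    exact_mod_cast h2
  have Hw : ∑ i ∈ Finset.Icc 1 Δ, (a i : ℤ) * ((i : ℤ) - 1) = (n : ℤ) + 2 := by
    have e1 : ∑ i ∈ Finset.Icc 1 Δ, (a i : ℤ) * ((i : ℤ) - 1)
        = (∑ i ∈ Finset.Icc 1 Δ, (i : ℤ) * (a i : ℤ))
          - ∑ i ∈ Finset.Icc 1 Δ, (a i : ℤ) := by
      rw [← Finset.sum_sub_distrib]
      exact Finset.sum_congr rfl fun i _ => by ring
    rw [e1, H1, H2]; ring
  -- the multiset of interior excesses
  set s : Multiset ℤ :=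
    (Finset.Icc 2 (Δ-1)).val.bind (fun i => Multiset.replicate (a i) ((i : ℤ) - 1)) with hs
  have hsum : s.sum = ∑ i ∈ Finset.Icc 2 (Δ-1), (a i : ℤ) * ((i : ℤ) - 1) := by
    rw [hs, Multiset.sum_bind, Finset.sum_eq_multiset_sum]
    congr 1
    exact Multiset.map_congr rfl fun i _ => by
      simp [Multiset.sum_replicate, nsmul_eq_mul]
  have hmapsum : (s.map (F D)).sum
      = ∑ i ∈ Finset.Icc 2 (Δ-1), (a i : ℤ) * F D ((i : ℤ) - 1) := by
    rw [hs, Multiset.map_bind, Multiset.sum_bind, Finset.sum_eq_multiset_sum]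
    congr 1
    exact Multiset.map_congr rfl fun i _ => by
      simp [Multiset.map_replicate, Multiset.sum_replicate, nsmul_eq_mul]
  have hmem : ∀ e ∈ s, 0 ≤ e ∧ e ≤ D - 2 := by
    intro e he
    rw [hs, Multiset.mem_bind] at he
    obtain ⟨i, hi, he⟩ := he
    rw [Multiset.eq_of_mem_replicate he]
    have hi' : 2 ≤ i ∧ i ≤ Δ - 1 := Finset.mem_Icc.1 hi
    rw [hD]
    omega
  -- interior excess sum
  have Hint : ∑ i ∈ Finset.Icc 2 (Δ-1), (a i : ℤ) * ((i : ℤ) - 1)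
      = (n : ℤ) + 2 - (D - 1) * (a Δ : ℤ) := by
    have := sum_split (fun i => (a i : ℤ) * ((i : ℤ) - 1))
    rw [Hw] at this
    push_cast at this ⊢
    linarith [this]
  have hcastn : (n : ℤ) = (D - 1) * (k : ℤ) + (p : ℤ) := by
    have h1Δ : 1 ≤ Δ := by omega
    rw [hD, hn]
    push_cast [h1Δ]
    ring
  have hdvd : (D - 1) ∣ s.sum - ((p : ℤ) + 2) := by
    refine ⟨(k : ℤ) - (a Δ : ℤ), ?_⟩
    rw [hsum, Hint, hcastn]; ring
  -- apply the key lemma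
  have hkey := key D p (by exact_mod_cast hp2) (by rw [hD]; omega) s.card s rfl hmem hdvd
  rw [hmapsum] at hkey
  -- main identity
  have hmain : ∑ i ∈ Finset.Icc 1 Δ, (i : ℤ) ^ 3 * (a i : ℤ)
      = (∑ i ∈ Finset.Icc 1 Δ, (1 + (D^2 + D + 1) * ((i:ℤ) - 1)) * (a i : ℤ))
        - ∑ i ∈ Finset.Icc 1 Δ, (a i : ℤ) * F D ((i:ℤ) - 1) := by
    rw [← Finset.sum_sub_distrib]
    refine Finset.sum_congr rfl fun i _ => ?_
    unfold F; ring
  have hfirst : ∑ i ∈ Finset.Icc 1 Δ, (1 + (D^2 + D + 1) * ((i:ℤ) - 1)) * (a i : ℤ)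
      = (n : ℤ) + (D^2 + D + 1) * ((n : ℤ) + 2) := by
    have e1 : ∑ i ∈ Finset.Icc 1 Δ, (1 + (D^2 + D + 1) * ((i:ℤ) - 1)) * (a i : ℤ)
        = (∑ i ∈ Finset.Icc 1 Δ, (a i : ℤ))
          + (D^2 + D + 1) * ∑ i ∈ Finset.Icc 1 Δ, (a i : ℤ) * ((i:ℤ) - 1) := by
      rw [Finset.mul_sum, ← Finset.sum_add_distrib]
      exact Finset.sum_congr rfl fun i _ => by ring
    rw [e1, H1, Hw]
  have hsecond : ∑ i ∈ Finset.Icc 1 Δ, (a i : ℤ) * F D ((i:ℤ) - 1)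
      = ∑ i ∈ Finset.Icc 2 (Δ-1), (a i : ℤ) * F D ((i:ℤ) - 1) := by
    have := sum_split (fun i => (a i : ℤ) * F D ((i:ℤ) - 1))
    have hF1 : F D 0 = 0 := by unfold F; ring
    have hFΔ : F D ((Δ:ℤ) - 1) = 0 := by unfold F; rw [hD]; ring
    rw [this]
    norm_num [hF1, hFΔ]
  have hRHS : (D ^ 2 + D + 2) * (n:ℤ) - p * (D ^ 2 + D + 2)
          + (p : ℤ) ^ 3 + 9 * (p : ℤ) ^ 2 + 28 * p + 26
      = (n : ℤ) + (D^2 + D + 1) * ((n : ℤ) + 2) - F D ((p : ℤ) + 2) := by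
    unfold F; rw [hD]; ring
  rw [hmain, hfirst, hsecond, hRHS]
  linarith
end
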